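/- Let f : X → U → ℝ with X convex and f(·,u) convex for every u. Suppose u₁,…,u_T ∈ U satisfies max_{u∈U} ∑_{t=1}^T f(x_t,u) − ∑_{t=1}^T f(x_t,u_t) ≤ R_u, where each x_t satisfies f(x_t,u_t) ≤ C · min_{x∈X} f(x,u_t) for some C > 1 (a C-approximate minimizer), and f is nonnegative. Then x̄ = (1/T)∑ x_t satisfies max_{u∈U} f(x̄,u) − C · min_{x∈X} max_{u∈U} f(x,u) ≤ R_u/T. -/

import Mathlib

/-!
Each round's approximate best response satisfies
`f (x t) (u t) ≤ C · min_x f(x, u t) ≤ C · m` with `m = min_x max_u f(x, u)`,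
so the regret bound gives `max_u ∑ₜ f(x t, u) ≤ R_u + T C m`. By Jensen's inequality in
the convex argument, `max_u f(x̄, u)` is at most `1/T` times the left-hand side.
-/

open Finset

lemma ConvexOn.map_inv_card_smul_sum_le {E ι : Type*} [AddCommGroup E] [Module ℝ E]
    [Fintype ι] [Nonempty ι] {s : Set E} {g : E → ℝ} (hg : ConvexOn ℝ s g) {x : ι → E}
    (hx : ∀ i, x i ∈ s) :
    g ((Fintype.card ι : ℝ)⁻¹ • ∑ i, x i)
      ≤ (Fintype.card ι : ℝ)⁻¹ * ∑ i, g (x i) := by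
  have hcard : (Fintype.card ι : ℝ) ≠ 0 := by exact_mod_cast Fintype.card_ne_zero
  have hw : ∑ _i : ι, (Fintype.card ι : ℝ)⁻¹ = 1 := by
    rw [sum_const, card_univ, nsmul_eq_mul, mul_inv_cancel₀ hcard]
  rw [smul_sum, mul_sum]
  exact hg.map_sum_le (fun _ _ => by positivity) hw fun i _ => hx i

lemma ConvexOn.ciSup_map_inv_card_smul_sum_le {E ι β : Type*} [AddCommGroup E] [Module ℝ E]
    [Fintype ι] [Nonempty ι] [Nonempty β] {s : Set E} {g : E → β → ℝ}
    (hg : ∀ b, ConvexOn ℝ s fun y => g y b) {x : ι → E} (hx : ∀ i, x i ∈ s)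
    (hbdd : BddAbove (Set.range fun b => ∑ i, g (x i) b)) :
    ⨆ b, g ((Fintype.card ι : ℝ)⁻¹ • ∑ i, x i) b
      ≤ (Fintype.card ι : ℝ)⁻¹ * ⨆ b, ∑ i, g (x i) b :=
  ciSup_le fun b => ((hg b).map_inv_card_smul_sum_le hx).trans <|
    mul_le_mul_of_nonneg_left (le_ciSup hbdd b) (by positivity)

lemma csInf_image_le_csInf_image_ciSup {α β : Type*} {s : Set α} (hs : s.Nonempty)
    {g : α → β → ℝ} (hbdd : ∀ a, BddAbove (Set.range (g a))) (b : β)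
    (hbelow : BddBelow ((fun a => g a b) '' s)) :
    sInf ((fun a => g a b) '' s) ≤ sInf ((fun a => ⨆ b', g a b') '' s) := by
  refine le_csInf (hs.image _) ?_
  rintro _ ⟨a, ha, rfl⟩
  exact (csInf_le hbelow ⟨a, ha, rfl⟩).trans (le_ciSup (hbdd a) b)

theorem stmt_2_general {n : ℕ} {U : Type*} [TopologicalSpace U] [CompactSpace U] [Nonempty U]
    (X : Set (EuclideanSpace ℝ (Fin n)))
    (f : EuclideanSpace ℝ (Fin n) → U → ℝ)
    (hfcont : Continuous fun p : EuclideanSpace ℝ (Fin n) × U => f p.1 p.2)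
    (hfnonneg : ∀ x u, 0 ≤ f x u)
    (hfconv : ∀ u : U, ConvexOn ℝ X fun x => f x u)
    (C : ℝ) (hC : 1 < C)
    (T : ℕ) (hT : 1 ≤ T)
    (x : Fin T → EuclideanSpace ℝ (Fin n)) (u : Fin T → U)
    (hxX : ∀ t, x t ∈ X)
    (hxapprox : ∀ t, f (x t) (u t) ≤ C * sInf ((fun x' => f x' (u t)) '' X))
    (Ru : ℝ)
    (hRu : (⨆ u' : U, ∑ t, f (x t) u') - ∑ t, f (x t) (u t) ≤ Ru) :
    (⨆ u' : U, f ((T : ℝ)⁻¹ • ∑ t, x t) u')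
      - C * sInf ((fun x' => ⨆ u' : U, f x' u') '' X) ≤ Ru / T := by
  have hTpos : (0 : ℝ) < T := by exact_mod_cast hT
  have : Nonempty (Fin T) := ⟨⟨0, hT⟩⟩
  have hcont (y) : Continuous (f y) := hfcont.comp (continuous_const.prodMk continuous_id)
  set m := sInf ((fun x' => ⨆ u' : U, f x' u') '' X)
  have hmean :
      (⨆ u', f ((T : ℝ)⁻¹ • ∑ t, x t) u')
        ≤ (T : ℝ)⁻¹ * ⨆ u', ∑ t, f (x t) u' := by
    simpa only [Fintype.card_fin] using ConvexOn.ciSup_map_inv_card_smul_sum_le hfconv hxX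
      (isCompact_range (continuous_finsetSum _ fun t _ => hcont (x t))).bddAbove
  have hround (t : Fin T) : f (x t) (u t) ≤ C * m := by
    have hbelow : BddBelow ((fun y => f y (u t)) '' X) :=
      ⟨0, by rintro _ ⟨y, -, rfl⟩; exact hfnonneg y (u t)⟩
    have hbest := csInf_image_le_csInf_image_ciSup ⟨x t, hxX t⟩
      (fun y => (isCompact_range (hcont y)).bddAbove) (u t) hbelow
    exact (hxapprox t).trans (mul_le_mul_of_nonneg_left hbest (by linarith))
  have hplay : ∑ t, f (x t) (u t) ≤ T * (C * m) := by
    simpa using sum_le_sum fun t (_ : t ∈ univ) => hround t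
  calc (⨆ u', f ((T : ℝ)⁻¹ • ∑ t, x t) u') - C * m
      ≤ (T : ℝ)⁻¹ * (Ru + T * (C * m)) - C * m := by
        gcongr
        exact hmean.trans (mul_le_mul_of_nonneg_left (by linarith) (by positivity))
    _ = Ru / T := by field_simp; ring

/-- Biased play with a `C`-approximate optimization oracle for the primal
player: the average iterate is `C`-approximately minimax optimal. -/
theorem stmt_2 {n : ℕ} {U : Type*} [TopologicalSpace U] [CompactSpace U] [Nonempty U]
    (X : Set (EuclideanSpace ℝ (Fin n))) (hXne : X.Nonempty) (hXcpt : IsCompact X)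
    (hXconv : Convex ℝ X)
    (f : EuclideanSpace ℝ (Fin n) → U → ℝ)
    (hfcont : Continuous fun p : EuclideanSpace ℝ (Fin n) × U => f p.1 p.2)
    (hfnonneg : ∀ x u, 0 ≤ f x u)
    (hfconv : ∀ u : U, ConvexOn ℝ X fun x => f x u)
    (C : ℝ) (hC : 1 < C)
    (T : ℕ) (hT : 1 ≤ T)
    (x : Fin T → EuclideanSpace ℝ (Fin n)) (u : Fin T → U)
    (hxX : ∀ t, x t ∈ X)
    (hxapprox : ∀ t, f (x t) (u t) ≤ C * sInf ((fun x' => f x' (u t)) '' X))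
    (Ru : ℝ)
    (hRu : (⨆ u' : U, ∑ t, f (x t) u') - ∑ t, f (x t) (u t) ≤ Ru) :
    (⨆ u' : U, f ((T : ℝ)⁻¹ • ∑ t, x t) u')
      - C * sInf ((fun x' => ⨆ u' : U, f x' u') '' X) ≤ Ru / T :=
  stmt_2_general X f hfcont hfnonneg hfconv C hC T hT x u hxX hxapprox Ru hRu
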